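/- Let L be a lower fence of a poset P and M : P → Vec a persistence module. Then the canonical section extension map e : lim M|_L → lim M, sending (v_p)_{p∈L} to (w_q)_{q∈P} with w_q = M(p ≤ q)(v_p) for any p ∈ L with p ≤ q, is a well-defined isomorphism of vector spaces. -/

import Mathlib

open CategoryTheory Limits

variable (K : Type) [Field K] {P : Type} [PartialOrder P]

/-- Zigzag-connectedness of a subset of a poset. -/
def ConnectedIn (I : Set P) : Prop :=
  ∀ p ∈ I, ∀ q ∈ I, Relation.ReflTransGen (fun a b => a ∈ I ∧ b ∈ I ∧ (a ≤ b ∨ b ≤ a)) p q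

/-- Convexity of a subset of a poset. -/
def ConvexIn (I : Set P) : Prop :=
  ∀ ⦃p q r : P⦄, p ∈ I → r ∈ I → p ≤ q → q ≤ r → q ∈ I

/-- An interval of a poset: nonempty, convex and connected. -/
def IsIntervalSet (I : Set P) : Prop :=
  I.Nonempty ∧ ConvexIn I ∧ ConnectedIn I

/-- Restriction of a persistence module to a subset of the indexing poset. -/
def restrict (M : P ⥤ ModuleCat.{0} K) (I : Set P) : I ⥤ ModuleCat.{0} K :=
  (Monotone.functor (f := (Subtype.val : I → P)) (fun _ _ h => h)) ⋙ M

/-- The canonical limit-to-colimit map `i_p ∘ π_p` of the restriction of `M` to `I`. -/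
noncomputable def canMap (M : P ⥤ ModuleCat.{0} K) (I : Set P) (p : P) (hp : p ∈ I) :
    limit (restrict K M I) ⟶ colimit (restrict K M I) :=
  limit.π (restrict K M I) ⟨p, hp⟩ ≫ colimit.ι (restrict K M I) ⟨p, hp⟩

open Classical in
/-- The generalized rank of `M` over `I` (for `I` an interval, independent of basepoint). -/
noncomputable def genRank (M : P ⥤ ModuleCat.{0} K) (I : Set P) : Cardinal :=
  if h : I.Nonempty then LinearMap.rank (canMap K M I h.choose h.choose_spec).hom else 0


/-- A lower fence of (the subposet) `I`. -/
def IsLowerFenceOf (I L : Set P) : Prop :=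
  L ⊆ I ∧ ConnectedIn L ∧ ∀ q ∈ I, (L ∩ {r | r ≤ q}).Nonempty ∧ ConnectedIn (L ∩ {r | r ≤ q})

/-- An upper fence of (the subposet) `I`. -/
def IsUpperFenceOf (I U : Set P) : Prop :=
  U ⊆ I ∧ ConnectedIn U ∧ ∀ q ∈ I, (U ∩ {r | q ≤ r}).Nonempty ∧ ConnectedIn (U ∩ {r | q ≤ r})

/-- The space of sections of a persistence module: compatible tuples. -/
def sectionsSubmodule (M : P ⥤ ModuleCat.{0} K) : Submodule K (∀ p, M.obj p) where
  carrier := {v | ∀ (p q : P) (h : p ≤ q), M.map h.hom (v p) = v q}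
  add_mem' := by intro a b ha hb p q h; simp [map_add, ha p q h, hb p q h]
  zero_mem' := by intro p q h; simp
  smul_mem' := by intro c a ha p q h; simp [map_smul, ha p q h]

open Classical in
/-- `⊤` if `b` holds, `⊥` otherwise; underlying space of an interval module at a point. -/
noncomputable def condSub (b : Prop) : Submodule K K := if b then ⊤ else ⊥

open Classical in
/-- The structure map of an interval module. -/
noncomputable def condMap (b c : Prop) : condSub K b →ₗ[K] condSub K c where
  toFun x := ⟨if b ∧ c then (x : K) else 0, by
    by_cases hc : c
    · simp [condSub, hc]
    · have hS : condSub K c = ⊥ := if_neg hc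
      rw [hS, if_neg (fun h => hc h.2)]
      exact Submodule.zero_mem _⟩
  map_add' x y := by ext; split_ifs <;> simp
  map_smul' r x := by ext; split_ifs <;> simp

lemma condMap_id (b : Prop) : condMap K b b = LinearMap.id := by
  classical
  ext x
  by_cases hb : b
  · simp [condMap, hb]
  · have hS : condSub K b = ⊥ := if_neg hb
    have hx : (x : K) = 0 := (Submodule.mem_bot K).1 (by rw [← hS]; exact x.2)
    simp [condMap, hb, hx]

lemma condMap_comp (b c d : Prop) (h : b → d → c) :
    (condMap K c d).comp (condMap K b c) = condMap K b d := by
  classical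
  ext x
  by_cases hb : b <;> by_cases hc : c <;> by_cases hd : d <;>
    simp [condMap, hb, hc, hd]
  exact absurd (h hb hd) hc

/-- The interval module supported on a convex set `S`. -/
noncomputable def IM (S : Set P) (hS : ConvexIn S) : P ⥤ ModuleCat.{0} K where
  obj p := ModuleCat.of K (condSub K (p ∈ S))
  map {p q} h := ModuleCat.ofHom (condMap K (p ∈ S) (q ∈ S))
  map_id p := by
    rw [condMap_id]
    rfl
  map_comp {p q r} h h' := by
    rw [← condMap_comp K (p ∈ S) (q ∈ S) (r ∈ S) (fun hp hr => hS hp hr h.le h'.le)]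
    rfl

/-- For a lower fence `L` of `P`, the canonical section extension map
`e : lim M|_L → lim M`, `(v_p)_{p∈L} ↦ (w_q)_q` with `w_q = M(p ≤ q)(v_p)` for any
`p ∈ L` with `p ≤ q`, is a well-defined isomorphism. -/
theorem section_extension_iso (M : P ⥤ ModuleCat.{0} K) (L : Set P)
    (hL : IsLowerFenceOf (Set.univ : Set P) L) :
    ∃ e : sectionsSubmodule K (restrict K M L) ≃ₗ[K] sectionsSubmodule K M,
      ∀ (v : sectionsSubmodule K (restrict K M L)) (q : P) (p : P) (hp : p ∈ L)
        (hpq : p ≤ q),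
        (e v : ∀ r : P, (M.obj r : Type)) q
          = M.map hpq.hom
              ((v : ∀ r : L, ((restrict K M L).obj r : Type)) ⟨p, hp⟩) := by
  classical
  obtain ⟨hLsub, hLconn, hfence⟩ := hL
  -- defeq: restrict's map is M's map
  have hres : ∀ (a b : L) (h : a ≤ b) (x : (restrict K M L).obj a),
      (restrict K M L).map h.hom x = M.map (homOfLE (show a.1 ≤ b.1 from h)) x := by
    intro a b h x; rfl
  -- step lemma
  have step : ∀ (q a b : P) (ha : a ∈ L) (hb : b ∈ L) (hab : a ≤ b) (hbq : b ≤ q)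
      (v : sectionsSubmodule K (restrict K M L)),
      M.map (hab.trans hbq).hom ((v : ∀ r : L, ((restrict K M L).obj r : Type)) ⟨a, ha⟩)
        = M.map hbq.hom ((v : ∀ r : L, ((restrict K M L).obj r : Type)) ⟨b, hb⟩) := by
    intro q a b ha hb hab hbq v
    have hv := v.2 ⟨a, ha⟩ ⟨b, hb⟩ hab
    rw [hres] at hv
    rw [← hv]
    have hcomp : (hab.trans hbq).hom = homOfLE hab ≫ hbq.hom := rfl
    rw [hcomp, M.map_comp]
    rfl
  -- key well-definedness lemma
  have key : ∀ (v : sectionsSubmodule K (restrict K M L)) (q p p' : P) (hp : p ∈ L)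
      (hp' : p' ∈ L) (hpq : p ≤ q) (hp'q : p' ≤ q),
      M.map hpq.hom ((v : ∀ r : L, ((restrict K M L).obj r : Type)) ⟨p, hp⟩)
        = M.map hp'q.hom ((v : ∀ r : L, ((restrict K M L).obj r : Type)) ⟨p', hp'⟩) := by
    intro v q p p' hp hp' hpq hp'q
    suffices h : ∀ b : P, Relation.ReflTransGen
        (fun x y => x ∈ L ∩ {r | r ≤ q} ∧ y ∈ L ∩ {r | r ≤ q} ∧ (x ≤ y ∨ y ≤ x)) p b →
        ∀ (hb : b ∈ L) (hbq : b ≤ q),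
        M.map hpq.hom ((v : ∀ r : L, ((restrict K M L).obj r : Type)) ⟨p, hp⟩)
          = M.map hbq.hom ((v : ∀ r : L, ((restrict K M L).obj r : Type)) ⟨b, hb⟩) by
      exact h p' ((hfence q trivial).2 p ⟨hp, hpq⟩ p' ⟨hp', hp'q⟩) hp' hp'q
    intro b' hconn
    induction hconn with
    | refl => intro hp' hp'q; rfl
    | @tail b c hpb hbc ih =>
      intro hc hcq
      obtain ⟨hbS, hcS, hor⟩ := hbc
      rw [ih hbS.1 hbS.2]
      rcases hor with h | h
      · exact step q _ _ hbS.1 hcS.1 h hcq v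
      · exact (step q _ _ hcS.1 hbS.1 h hbS.2 v).symm
  -- the restriction linear map
  let res : sectionsSubmodule K M →ₗ[K] sectionsSubmodule K (restrict K M L) :=
    { toFun := fun w => ⟨fun p => (w : ∀ r : P, (M.obj r : Type)) p.1, by
        intro a b h
        exact w.2 a.1 b.1 h⟩
      map_add' := fun w w' => rfl
      map_smul' := fun c w => rfl }
  have hinj : Function.Injective res := by
    intro w w' h
    ext q
    obtain ⟨p, hpL, hpq⟩ := (hfence q trivial).1
    have h1 := w.2 p q hpq
    have h2 := w'.2 p q hpq
    have hpp : (w : ∀ r : P, (M.obj r : Type)) p = (w' : ∀ r : P, (M.obj r : Type)) p :=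
      congrFun (congrArg Subtype.val h) ⟨p, hpL⟩
    rw [← h1, ← h2, hpp]
  have hsurj : Function.Surjective res := by
    intro v
    -- construct the extension
    refine ⟨⟨fun q => M.map (((hfence q trivial).1.choose_spec).2 : _ ≤ q).hom
        ((v : ∀ r : L, ((restrict K M L).obj r : Type)) ⟨_, ((hfence q trivial).1.choose_spec).1⟩), ?_⟩, ?_⟩
    · intro q q' hqq'
      obtain ⟨hpL, hpq⟩ := (hfence q trivial).1.choose_spec
      obtain ⟨hp'L, hp'q'⟩ := (hfence q' trivial).1.choose_spec
      dsimp only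
      rw [← key v q' _ _ hpL hp'L (hpq.trans hqq') hp'q']
      have hcomp : ((hpq.trans hqq').hom : _ ⟶ q') = hpq.hom ≫ hqq'.hom := rfl
      rw [hcomp, M.map_comp]
      rfl
    · apply Subtype.ext
      funext p
      obtain ⟨hpL, hpq⟩ := (hfence p.1 trivial).1.choose_spec
      have h1 := key v p.1 _ p.1 hpL p.2 hpq le_rfl
      have h2 : M.map (le_refl p.1).hom = 𝟙 (M.obj p.1) := M.map_id p.1
      show M.map (hpq : _ ≤ p.1).hom
          ((v : ∀ r : L, ((restrict K M L).obj r : Type)) ⟨_, hpL⟩) = _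
      rw [h1, h2]
      rfl
  let e := (LinearEquiv.ofBijective res ⟨hinj, hsurj⟩).symm
  refine ⟨e, ?_⟩
  intro v q p hp hpq
  have hre : res (e v) = v := (LinearEquiv.ofBijective res ⟨hinj, hsurj⟩).apply_symm_apply v
  have hp1 : ((e v : sectionsSubmodule K M) : ∀ r : P, (M.obj r : Type)) p
      = (v : ∀ r : L, ((restrict K M L).obj r : Type)) ⟨p, hp⟩ :=
    congrArg (fun u : sectionsSubmodule K (restrict K M L) =>
      (u : ∀ r : L, ((restrict K M L).obj r : Type)) ⟨p, hp⟩) hre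
  rw [← hp1]
  exact ((e v : sectionsSubmodule K M).2 p q hpq).symm
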